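/- arXiv:2101.06118 — 8 statements merged into one kernel-verified Lean document; each statement's English description precedes it below -/
import Mathlib

section
/- If m is a k-subadditive set function on an algebra L of subsets of G with values in the positive cone of a Dedekind complete lattice group (i.e., m(∅)=0 and m(A∪B) ≤ m(A) + k·m(B) for disjoint A,B ∈ L), then its semivariation v(m), defined by v(m)(A) = sup{ m(B) : B ∈ L, B ⊆ A }, is k-triangular: it is k-subadditive and satisfies v(m)(A) − k·v(m)(B) ≤ v(m)(A∪B) for all disjoint A,B ∈ L. -/
/-- If `m` is a `k`-subadditive set function on an algebra `L` of subsets of `G`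
(with values in `ℝ`, taken as the Dedekind complete lattice group), then its
semivariation `v(m)(A) = sup { m B : B ∈ L, B ⊆ A }` is `k`-triangular. -/
theorem semivariation_kTriangular {G : Type*} (L : Set (Set G)) (k : ℕ) (hk : 0 < k)
    (hL_empty : (∅ : Set G) ∈ L)
    (hL_union : ∀ A B : Set G, A ∈ L → B ∈ L → A ∪ B ∈ L)
    (hL_compl : ∀ A : Set G, A ∈ L → Aᶜ ∈ L)
    (m : Set G → ℝ)
    (hm_nonneg : ∀ A ∈ L, 0 ≤ m A)
    (hm_bdd : ∃ u : ℝ, ∀ A ∈ L, m A ≤ u)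
    (hm_empty : m ∅ = 0)
    (hm_subadd : ∀ A B : Set G, A ∈ L → B ∈ L → Disjoint A B →
      m (A ∪ B) ≤ m A + (k : ℝ) * m B)
    (v : Set G → ℝ)
    (hv : ∀ A : Set G, v A = sSup {x : ℝ | ∃ B ∈ L, B ⊆ A ∧ x = m B}) :
    v ∅ = 0 ∧
    (∀ A B : Set G, A ∈ L → B ∈ L → Disjoint A B →
      v (A ∪ B) ≤ v A + (k : ℝ) * v B) ∧
    (∀ A B : Set G, A ∈ L → B ∈ L → Disjoint A B →
      v A - (k : ℝ) * v B ≤ v (A ∪ B)) := by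
  obtain ⟨u, hu⟩ := hm_bdd
  -- intersection closure
  have hL_inter : ∀ A B : Set G, A ∈ L → B ∈ L → A ∩ B ∈ L := by
    intro A B hA hB
    have : A ∩ B = (Aᶜ ∪ Bᶜ)ᶜ := by simp [Set.compl_union]
    rw [this]
    exact hL_compl _ (hL_union _ _ (hL_compl _ hA) (hL_compl _ hB))
  have hne : ∀ A : Set G, (0 : ℝ) ∈ {x : ℝ | ∃ B ∈ L, B ⊆ A ∧ x = m B} :=
    fun A => ⟨∅, hL_empty, Set.empty_subset A, hm_empty.symm⟩
  have hbdd : ∀ A : Set G, BddAbove {x : ℝ | ∃ B ∈ L, B ⊆ A ∧ x = m B} := by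
    intro A
    exact ⟨u, fun x ⟨B, hB, _, hx⟩ => hx ▸ hu B hB⟩
  have hv_nonneg : ∀ A : Set G, 0 ≤ v A := by
    intro A
    rw [hv A]
    exact le_csSup (hbdd A) (hne A)
  have hmem_le : ∀ (A B : Set G), B ∈ L → B ⊆ A → m B ≤ v A := by
    intro A B hB hBA
    rw [hv A]
    exact le_csSup (hbdd A) ⟨B, hB, hBA, rfl⟩
  have hv_mono : ∀ A B : Set G, A ⊆ B → v A ≤ v B := by
    intro A B hAB
    rw [hv A]
    apply csSup_le ⟨0, hne A⟩
    rintro x ⟨C, hC, hCA, rfl⟩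
    exact hmem_le B C hC (hCA.trans hAB)
  refine ⟨?_, ?_, ?_⟩
  · rw [hv ∅]
    apply le_antisymm
    · apply csSup_le ⟨0, hne ∅⟩
      rintro x ⟨C, hC, hC0, rfl⟩
      rw [Set.subset_empty_iff] at hC0
      simp [hC0, hm_empty]
    · exact le_csSup (hbdd ∅) (hne ∅)
  · intro A B hA hB hAB
    rw [hv (A ∪ B)]
    apply csSup_le ⟨0, hne _⟩
    rintro x ⟨C, hC, hCAB, rfl⟩
    have h1 : C ∩ A ∈ L := hL_inter _ _ hC hA
    have h2 : C ∩ B ∈ L := hL_inter _ _ hC hB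
    have hCeq : C = (C ∩ A) ∪ (C ∩ B) := by
      rw [← Set.inter_union_distrib_left]
      exact (Set.inter_eq_left.mpr hCAB).symm
    have hdisj : Disjoint (C ∩ A) (C ∩ B) :=
      (hAB.mono (Set.inter_subset_right) (Set.inter_subset_right))
    calc m C = m ((C ∩ A) ∪ (C ∩ B)) := by rw [← hCeq]
      _ ≤ m (C ∩ A) + (k : ℝ) * m (C ∩ B) := hm_subadd _ _ h1 h2 hdisj
      _ ≤ v A + (k : ℝ) * v B := by
          have := hmem_le A (C ∩ A) h1 Set.inter_subset_right
          have := hmem_le B (C ∩ B) h2 Set.inter_subset_right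
          have hk' : (0 : ℝ) ≤ k := Nat.cast_nonneg k
          nlinarith [hmem_le A (C ∩ A) h1 Set.inter_subset_right,
            hmem_le B (C ∩ B) h2 Set.inter_subset_right]
  · intro A B hA hB hAB
    have h1 : v A ≤ v (A ∪ B) := hv_mono A (A ∪ B) Set.subset_union_left
    have h2 : 0 ≤ (k : ℝ) * v B :=
      mul_nonneg (Nat.cast_nonneg k) (hv_nonneg B)
    linarith
end

section
/- Let m : L → [0,∞) be a k-triangular set function on a σ-algebra L that is continuous from above at ∅ (i.e., m(Hₙ) → 0 for every decreasing sequence (Hₙ) in L with empty intersection). Then m is (s)-bounded: m(Cₕ) → 0 for every pairwise disjoint sequence (Cₕ) in L. -/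
open Filter Topology

/-- A `k`-triangular nonnegative set function on a σ-algebra that is continuous
from above at `∅` is `(s)`-bounded: `m (C h) → 0` for every pairwise disjoint
sequence `(C h)` in the σ-algebra. -/
theorem kTriangular_contAbove_sBounded {G : Type*} (L : Set (Set G)) (k : ℕ) (hk : 0 < k)
    (hL_empty : (∅ : Set G) ∈ L)
    (hL_compl : ∀ A : Set G, A ∈ L → Aᶜ ∈ L)
    (hL_iUnion : ∀ A : ℕ → Set G, (∀ n, A n ∈ L) → (⋃ n, A n) ∈ L)
    (m : Set G → ℝ)
    (hm_nonneg : ∀ A ∈ L, 0 ≤ m A)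
    (hm_empty : m ∅ = 0)
    (hm_subadd : ∀ A B : Set G, A ∈ L → B ∈ L → Disjoint A B →
      m (A ∪ B) ≤ m A + (k : ℝ) * m B)
    (hm_tri : ∀ A B : Set G, A ∈ L → B ∈ L → Disjoint A B →
      m A - (k : ℝ) * m B ≤ m (A ∪ B))
    (hm_cont : ∀ H : ℕ → Set G, (∀ n, H n ∈ L) → Antitone H → (⋂ n, H n) = ∅ →
      Tendsto (fun n => m (H n)) atTop (𝓝 0)) :
    ∀ C : ℕ → Set G, (∀ h, C h ∈ L) → Pairwise (Function.onFun Disjoint C) →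
      Tendsto (fun h => m (C h)) atTop (𝓝 0) := by
  intro C hC hdisj
  set H : ℕ → Set G := fun n => ⋃ i, C (i + n) with hH
  have hHL : ∀ n, H n ∈ L := fun n => hL_iUnion _ (fun i => hC _)
  have hdecomp : ∀ n, H n = C n ∪ H (n + 1) := by
    intro n
    ext x
    simp only [hH, Set.mem_iUnion, Set.mem_union]
    constructor
    · rintro ⟨i, hi⟩
      cases i with
      | zero => exact Or.inl (by simpa using hi)
      | succ j => exact Or.inr ⟨j, by rwa [show j + (n+1) = j + 1 + n by ring]⟩
    · rintro (h | ⟨i, hi⟩)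
      · exact ⟨0, by simpa using h⟩
      · exact ⟨i + 1, by rwa [show i + 1 + n = i + (n+1) by ring]⟩
  have hdisjCH : ∀ n, Disjoint (C n) (H (n + 1)) := by
    intro n
    simp only [hH, Set.disjoint_iUnion_right]
    intro i
    exact hdisj (by omega)
  have hAnti : Antitone H := by
    apply antitone_nat_of_succ_le
    intro n
    rw [hdecomp n]
    exact Set.subset_union_right
  have hInter : (⋂ n, H n) = ∅ := by
    ext x
    simp only [Set.mem_iInter, Set.mem_empty_iff_false, iff_false]
    intro hx
    obtain ⟨i, hi⟩ := Set.mem_iUnion.mp (hx 0)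
    obtain ⟨j, hj⟩ := Set.mem_iUnion.mp (hx (i + 1))
    have : i ≠ j + (i + 1) := by omega
    exact (hdisj this).le_bot ⟨by simpa using hi, hj⟩
  have hmH : Tendsto (fun n => m (H n)) atTop (𝓝 0) := hm_cont H hHL hAnti hInter
  have hbound : ∀ n, m (C n) ≤ m (H n) + (k : ℝ) * m (H (n + 1)) := by
    intro n
    have := hm_tri (C n) (H (n + 1)) (hC n) (hHL (n + 1)) (hdisjCH n)
    rw [← hdecomp n] at this
    linarith
  have hub : Tendsto (fun n => m (H n) + (k : ℝ) * m (H (n + 1))) atTop (𝓝 0) := by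
    have h1 : Tendsto (fun n => m (H (n + 1))) atTop (𝓝 0) :=
      hmH.comp (tendsto_add_atTop_nat 1)
    have := hmH.add (h1.const_mul (k : ℝ))
    simpa using this
  exact squeeze_zero (fun n => hm_nonneg _ (hC n)) hbound hub
end

section
/- Let m : L → [0,∞) be an (s)-bounded set function on an algebra L, meaning m(Cₕ) → 0 for every disjoint sequence (Cₕ) in L. Then the semivariation v(m), defined by v(m)(A) = sup{ m(B) : B ∈ L, B ⊆ A }, is also (s)-bounded. -/
open Filter Topology

/-- If a nonnegative bounded set function `m` on an algebra `L` is `(s)`-bounded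
(`m (C h) → 0` for every disjoint sequence in `L`), then its semivariation
`v(m)(A) = sup { m B : B ∈ L, B ⊆ A }` is `(s)`-bounded too. -/
theorem semivariation_sBounded {G : Type*} (L : Set (Set G))
    (hL_empty : (∅ : Set G) ∈ L)
    (hL_union : ∀ A B : Set G, A ∈ L → B ∈ L → A ∪ B ∈ L)
    (hL_compl : ∀ A : Set G, A ∈ L → Aᶜ ∈ L)
    (m : Set G → ℝ)
    (hm_nonneg : ∀ A ∈ L, 0 ≤ m A)
    (hm_bdd : ∃ u : ℝ, ∀ A ∈ L, m A ≤ u)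
    (hm_empty : m ∅ = 0)
    (hm_sb : ∀ C : ℕ → Set G, (∀ h, C h ∈ L) → Pairwise (Function.onFun Disjoint C) →
      Tendsto (fun h => m (C h)) atTop (𝓝 0))
    (v : Set G → ℝ)
    (hv : ∀ A : Set G, v A = sSup {x : ℝ | ∃ B ∈ L, B ⊆ A ∧ x = m B}) :
    ∀ C : ℕ → Set G, (∀ h, C h ∈ L) → Pairwise (Function.onFun Disjoint C) →
      Tendsto (fun h => v (C h)) atTop (𝓝 0) := by
  intro C hC hCd
  obtain ⟨u, hu⟩ := hm_bdd
  -- basic facts about the sets defining v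
  have hne : ∀ h : ℕ, ({x : ℝ | ∃ B ∈ L, B ⊆ C h ∧ x = m B}).Nonempty := fun h =>
    ⟨m ∅, ∅, hL_empty, Set.empty_subset _, rfl⟩
  have hbdd : ∀ h : ℕ, BddAbove {x : ℝ | ∃ B ∈ L, B ⊆ C h ∧ x = m B} := fun h =>
    ⟨u, fun x ⟨B, hB, _, hx⟩ => hx ▸ hu B hB⟩
  have hv_nonneg : ∀ h : ℕ, 0 ≤ v (C h) := by
    intro h
    rw [hv]
    calc (0:ℝ) = m ∅ := hm_empty.symm
    _ ≤ _ := le_csSup (hbdd h) ⟨∅, hL_empty, Set.empty_subset _, rfl⟩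
  rw [Metric.tendsto_atTop]
  by_contra hcon
  push_neg at hcon
  obtain ⟨ε, hε, hfreq⟩ := hcon
  have hfreq' : ∃ᶠ h in atTop, ε ≤ v (C h) := by
    rw [Filter.frequently_atTop]
    intro a
    obtain ⟨n, hn, hd⟩ := hfreq a
    refine ⟨n, hn, ?_⟩
    rw [Real.dist_eq, sub_zero, abs_of_nonneg (hv_nonneg n)] at hd
    exact hd
  obtain ⟨φ, hφ, hφε⟩ := Filter.extraction_of_frequently_atTop hfreq'
  -- choose B k ⊆ C (φ k) with m (B k) > ε/2
  have hex : ∀ k : ℕ, ∃ B, B ∈ L ∧ B ⊆ C (φ k) ∧ ε / 2 < m B := by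
    intro k
    have h1 : ε / 2 < sSup {x : ℝ | ∃ B ∈ L, B ⊆ C (φ k) ∧ x = m B} := by
      rw [← hv]; linarith [hφε k]
    obtain ⟨x, ⟨B, hB, hBsub, hx⟩, hlt⟩ := exists_lt_of_lt_csSup (hne (φ k)) h1
    exact ⟨B, hB, hBsub, hx ▸ hlt⟩
  choose B hBL hBsub hBlt using hex
  have hBd : Pairwise (Function.onFun Disjoint B) := fun i j hij =>
    (hCd (hφ.injective.ne hij)).mono (hBsub i) (hBsub j)
  have := hm_sb B hBL hBd
  rw [Metric.tendsto_atTop] at this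
  obtain ⟨N, hN⟩ := this (ε / 2) (by linarith)
  have := hN N le_rfl
  rw [Real.dist_eq, sub_zero, abs_of_nonneg (hm_nonneg _ (hBL N))] at this
  linarith [hBlt N]
end

section
/- Let m : L → [0,∞) be a k-triangular set function on a σ-algebra L, continuous from above at ∅. Then its semivariation v(m)(A) = sup{ m(B) : B ∈ L, B ⊆ A } is also continuous from above at ∅: for every decreasing sequence (Aₙ) in L with ⋂ₙ Aₙ = ∅, lim_n v(m)(Aₙ) = 0. -/
open Filter Topology

/-- If a nonnegative bounded `k`-triangular set function `m` on a σ-algebra `L`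
is continuous from above at `∅`, then its semivariation
`v(m)(A) = sup { m B : B ∈ L, B ⊆ A }` is continuous from above at `∅` too. -/
theorem semivariation_contAbove {G : Type*} (L : Set (Set G)) (k : ℕ) (hk : 0 < k)
    (hL_empty : (∅ : Set G) ∈ L)
    (hL_compl : ∀ A : Set G, A ∈ L → Aᶜ ∈ L)
    (hL_iUnion : ∀ A : ℕ → Set G, (∀ n, A n ∈ L) → (⋃ n, A n) ∈ L)
    (m : Set G → ℝ)
    (hm_nonneg : ∀ A ∈ L, 0 ≤ m A)
    (hm_bdd : ∃ u : ℝ, ∀ A ∈ L, m A ≤ u)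
    (hm_empty : m ∅ = 0)
    (hm_subadd : ∀ A B : Set G, A ∈ L → B ∈ L → Disjoint A B →
      m (A ∪ B) ≤ m A + (k : ℝ) * m B)
    (hm_tri : ∀ A B : Set G, A ∈ L → B ∈ L → Disjoint A B →
      m A - (k : ℝ) * m B ≤ m (A ∪ B))
    (hm_cont : ∀ H : ℕ → Set G, (∀ n, H n ∈ L) → Antitone H → (⋂ n, H n) = ∅ →
      Tendsto (fun n => m (H n)) atTop (𝓝 0))
    (v : Set G → ℝ)
    (hv : ∀ A : Set G, v A = sSup {x : ℝ | ∃ B ∈ L, B ⊆ A ∧ x = m B}) :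
    ∀ A : ℕ → Set G, (∀ n, A n ∈ L) → Antitone A → (⋂ n, A n) = ∅ →
      Tendsto (fun n => v (A n)) atTop (𝓝 0) := by
  intro A hA hAanti hAempty
  -- closure properties of the σ-algebra
  have hL_union2 : ∀ X Y : Set G, X ∈ L → Y ∈ L → X ∪ Y ∈ L := by
    intro X Y hX hY
    have h := hL_iUnion (fun n => if n = 0 then X else Y)
      (by intro n; by_cases h : n = 0 <;> simp [h, hX, hY])
    have he : (⋃ n, (if n = 0 then X else Y)) = X ∪ Y := by
      ext x
      simp only [Set.mem_iUnion, Set.mem_union]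
      constructor
      · rintro ⟨n, h⟩
        by_cases hn : n = 0
        · left; simpa [hn] using h
        · right; simpa [hn] using h
      · rintro (h | h)
        · exact ⟨0, by simpa using h⟩
        · exact ⟨1, by simpa using h⟩
    rwa [he] at h
  have hL_inter : ∀ X Y : Set G, X ∈ L → Y ∈ L → X ∩ Y ∈ L := by
    intro X Y hX hY
    have h := hL_compl _ (hL_union2 _ _ (hL_compl _ hX) (hL_compl _ hY))
    simpa [Set.compl_union] using h
  have hL_diff : ∀ X Y : Set G, X ∈ L → Y ∈ L → X \ Y ∈ L := by
    intro X Y hX hY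
    exact hL_inter _ _ hX (hL_compl _ hY)
  obtain ⟨u, hu⟩ := hm_bdd
  have hSet_ne : ∀ n, ({x : ℝ | ∃ B ∈ L, B ⊆ A n ∧ x = m B}).Nonempty := by
    intro n
    exact ⟨m ∅, ∅, hL_empty, Set.empty_subset _, rfl⟩
  have hSet_bdd : ∀ n, BddAbove {x : ℝ | ∃ B ∈ L, B ⊆ A n ∧ x = m B} := by
    intro n
    refine ⟨u, ?_⟩
    rintro x ⟨B, hB, -, rfl⟩
    exact hu B hB
  have hv_nonneg : ∀ n, 0 ≤ v (A n) := by
    intro n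
    rw [hv]
    have := le_csSup (hSet_bdd n) (show m ∅ ∈ _ from ⟨∅, hL_empty, Set.empty_subset _, rfl⟩)
    rwa [hm_empty] at this
  have hv_anti : ∀ i j : ℕ, i ≤ j → v (A j) ≤ v (A i) := by
    intro i j hij
    rw [hv, hv]
    apply csSup_le_csSup (hSet_bdd i) (hSet_ne j)
    rintro x ⟨B, hB, hBA, rfl⟩
    exact ⟨B, hB, hBA.trans (hAanti hij), rfl⟩
  rw [Metric.tendsto_atTop]
  intro ε hε
  by_contra hcon
  push_neg at hcon
  -- from failure, get a uniform lower bound ε on all v (A n)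
  have hεv : ∀ n, ε ≤ v (A n) := by
    intro n
    obtain ⟨n', hn', h⟩ := hcon n
    rw [Real.dist_eq, sub_zero, abs_of_nonneg (hv_nonneg n')] at h
    exact h.trans (hv_anti n n' hn')
  -- key step: strip off a chunk of mass ε/4 between two indices
  have key : ∀ N : ℕ, ∃ N' : ℕ, N < N' ∧ ∃ D, D ∈ L ∧ D ⊆ A N ∧ D ∩ A N' = ∅ ∧
      ε / 4 < m D := by
    intro N
    have h1 : ε / 2 < sSup {x : ℝ | ∃ B ∈ L, B ⊆ A N ∧ x = m B} := by
      have := hεv N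
      rw [hv] at this
      linarith
    obtain ⟨x, ⟨B, hB, hBA, rfl⟩, hx⟩ := exists_lt_of_lt_csSup (hSet_ne N) h1
    have hcont := hm_cont (fun j => B ∩ A j) (fun j => hL_inter _ _ hB (hA j))
      (fun i j hij => Set.inter_subset_inter_right _ (hAanti hij))
      (by rw [← Set.inter_iInter, hAempty, Set.inter_empty])
    have hkpos : (0 : ℝ) < k := by exact_mod_cast hk
    have hεk : 0 < ε / (4 * k) := by positivity
    obtain ⟨N', hsmall, hN'⟩ :=
      ((hcont.eventually (gt_mem_nhds hεk)).and (eventually_gt_atTop N)).exists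
    refine ⟨N', hN', B \ A N', hL_diff _ _ hB (hA N'), (Set.diff_subset).trans hBA,
      Set.diff_inter_self, ?_⟩
    · -- m B ≤ m (B \ A N') + k * m (B ∩ A N')
      have hdisj : Disjoint (B \ A N') (B ∩ A N') :=
        Set.disjoint_of_subset_right (Set.inter_subset_right) Set.disjoint_sdiff_left
      have hun : (B \ A N') ∪ (B ∩ A N') = B := Set.diff_union_inter B (A N')
      have hsub := hm_subadd (B \ A N') (B ∩ A N') (hL_diff _ _ hB (hA N'))
        (hL_inter _ _ hB (hA N')) hdisj
      rw [hun] at hsub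
      have hkm : (k : ℝ) * m (B ∩ A N') < ε / 4 := by
        have : m (B ∩ A N') < ε / (4 * k) := hsmall
        calc (k : ℝ) * m (B ∩ A N') < (k : ℝ) * (ε / (4 * k)) := by
              exact mul_lt_mul_of_pos_left this hkpos
          _ = ε / 4 := by field_simp
      linarith
  choose Nf hNf D hDL hDsub hDdisj hDm using key
  -- the increasing index sequence
  let idx : ℕ → ℕ := fun j => Nat.rec 0 (fun _ p => Nf p) j
  have hidx_succ : ∀ j, idx (j + 1) = Nf (idx j) := fun j => rfl
  have hidx_lt : ∀ j, idx j < idx (j + 1) := fun j => hNf (idx j)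
  have hidx_mono : Monotone idx := monotone_nat_of_le_succ (fun j => (hidx_lt j).le)
  have hidx_ge : ∀ j, j ≤ idx j := by
    intro j
    induction j with
    | zero => exact Nat.zero_le _
    | succ j ih => exact Nat.succ_le_of_lt (lt_of_le_of_lt ih (hidx_lt j))
  -- the disjoint chunks and the tail unions
  set Ds : ℕ → Set G := fun j => D (idx j) with hDs
  have hDsL : ∀ j, Ds j ∈ L := fun j => hDL (idx j)
  have hDsA : ∀ j, Ds j ⊆ A (idx j) := fun j => hDsub (idx j)
  have hDsd : ∀ j, Ds j ∩ A (idx (j + 1)) = ∅ := fun j => by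
    rw [hidx_succ]; exact hDdisj (idx j)
  set E : ℕ → Set G := fun n => ⋃ j, Ds (max n j) with hE
  have hEL : ∀ n, E n ∈ L := fun n => hL_iUnion _ (fun j => hDsL (max n j))
  have hEmem : ∀ n x, x ∈ E n ↔ ∃ j, n ≤ j ∧ x ∈ Ds j := by
    intro n x
    simp only [hE, Set.mem_iUnion]
    constructor
    · rintro ⟨j, hj⟩
      exact ⟨max n j, le_max_left _ _, hj⟩
    · rintro ⟨j, hnj, hj⟩
      exact ⟨j, by rwa [Nat.max_eq_right hnj]⟩
  have hEsplit : ∀ n, E n = Ds n ∪ E (n + 1) := by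
    intro n
    ext x
    rw [Set.mem_union, hEmem, hEmem]
    constructor
    · rintro ⟨j, hnj, hj⟩
      rcases eq_or_lt_of_le hnj with h | h
      · left; rwa [← h] at hj
      · right; exact ⟨j, h, hj⟩
    · rintro (h | ⟨j, hnj, hj⟩)
      · exact ⟨n, le_refl n, h⟩
      · exact ⟨j, by omega, hj⟩
  have hEanti : Antitone E := by
    apply antitone_nat_of_succ_le
    intro n
    rw [hEsplit n]
    exact Set.subset_union_right
  have hEsubA : ∀ n, E n ⊆ A (idx n) := by
    intro n
    intro x hx
    obtain ⟨j, hnj, hj⟩ := (hEmem n x).1 hx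
    exact hAanti (hidx_mono hnj) (hDsA j hj)
  have hEempty : (⋂ n, E n) = ∅ := by
    apply Set.eq_empty_of_subset_empty
    rw [← hAempty]
    intro x hx
    simp only [Set.mem_iInter] at hx ⊢
    intro n
    exact hAanti (hidx_ge n) (hEsubA n (hx n))
  have hEcont := hm_cont E hEL hEanti hEempty
  have hEcont' : Tendsto (fun n => m (E (n + 1))) atTop (𝓝 0) :=
    hEcont.comp (tendsto_add_atTop_nat 1)
  have hsum : Tendsto (fun n => m (E n) + (k : ℝ) * m (E (n + 1))) atTop (𝓝 0) := by
    have := hEcont.add (hEcont'.const_mul (k : ℝ))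
    simpa using this
  obtain ⟨n, hn⟩ := (hsum.eventually (gt_mem_nhds (show 0 < ε / 4 by linarith))).exists
  -- but each chunk has mass > ε/4, contradiction
  have hdisj : Disjoint (Ds n) (E (n + 1)) := by
    rw [Set.disjoint_iff_inter_eq_empty]
    apply Set.eq_empty_of_subset_empty
    rw [← hDsd n]
    exact Set.inter_subset_inter_right _ (hEsubA (n + 1))
  have htri := hm_tri (Ds n) (E (n + 1)) (hDsL n) (hEL (n + 1)) hdisj
  rw [← hEsplit n] at htri
  have := hDm (idx n)
  have : ε / 4 < m (E n) + (k : ℝ) * m (E (n + 1)) := by linarith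
  linarith
end

section
/- Drewnowski-type theorem (real-valued case): Let m : L → [0,∞) be an (s)-bounded set function on a σ-algebra L (i.e., v(m)(Cₙ) → 0 along tails of any disjoint sequence, where v(m) is the semivariation). Then for every pairwise disjoint sequence (Cₙ) in L there exists a subsequence (C_{n_h}) such that m is continuous from above at ∅ on the σ-algebra generated by the sets C_{n_h} inside ⋃_h C_{n_h}. -/
open Filter Topology

/-- Drewnowski-type theorem (real-valued case): if `m` is a nonnegative bounded
`(s)`-bounded set function on a σ-algebra `L`, then every pairwise disjoint
sequence `(C n)` in `L` has a subsequence `(C (n h))` such that `m` is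
continuous from above at `∅` on the σ-algebra generated by the sets `C (n h)`
inside their union (whose members are exactly the unions `⋃_{h ∈ P} C (n h)`). -/
theorem drewnowski_type {G : Type*} (L : Set (Set G))
    (hL_empty : (∅ : Set G) ∈ L)
    (hL_compl : ∀ A : Set G, A ∈ L → Aᶜ ∈ L)
    (hL_iUnion : ∀ A : ℕ → Set G, (∀ n, A n ∈ L) → (⋃ n, A n) ∈ L)
    (m : Set G → ℝ)
    (hm_nonneg : ∀ A ∈ L, 0 ≤ m A)
    (hm_bdd : ∃ u : ℝ, ∀ A ∈ L, m A ≤ u)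
    (hm_empty : m ∅ = 0)
    (hm_sb : ∀ A : ℕ → Set G, (∀ h, A h ∈ L) → Pairwise (Function.onFun Disjoint A) →
      Tendsto (fun h => m (A h)) atTop (𝓝 0)) :
    ∀ C : ℕ → Set G, (∀ n, C n ∈ L) → Pairwise (Function.onFun Disjoint C) →
      ∃ n : ℕ → ℕ, StrictMono n ∧
        ∀ F : ℕ → Set G, (∀ s, ∃ P : Set ℕ, F s = ⋃ h ∈ P, C (n h)) →
          Antitone F → (⋂ s, F s) = ∅ →
            Tendsto (fun s => m (F s)) atTop (𝓝 0) := by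
  classical
  intro C hC hCdisj
  -- arbitrary (countable) unions of the `C`'s are measurable
  have hUnion_mem : ∀ (D : ℕ → Set G), (∀ k, D k ∈ L) → ∀ P : Set ℕ,
      (⋃ h ∈ P, D h) ∈ L := by
    intro D hD P
    have heq : (⋃ h ∈ P, D h) = ⋃ k, (if k ∈ P then D k else ∅) := by
      ext x
      simp only [Set.mem_iUnion]
      constructor
      · rintro ⟨h, hh, hx⟩; exact ⟨h, by simp [hh, hx]⟩
      · rintro ⟨k, hx⟩
        by_cases hk : k ∈ P
        · exact ⟨k, hk, by simpa [hk] using hx⟩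
        · simp [hk] at hx
    rw [heq]
    exact hL_iUnion _ (fun k => by by_cases hk : k ∈ P <;> simp [hk, hD k, hL_empty])
  -- key step: inside every infinite set of indices there is an infinite subset
  -- on which all unions have small measure
  have key : ∀ ε : ℝ, 0 < ε → ∀ M : Set ℕ, M.Infinite →
      ∃ M' : Set ℕ, M' ⊆ M ∧ M'.Infinite ∧
        ∀ P : Set ℕ, P ⊆ M' → m (⋃ h ∈ P, C h) ≤ ε := by
    intro ε hε M hM
    by_contra hcon
    push_neg at hcon
    set g : ℕ → ℕ := fun i => ((Set.Infinite.natEmbedding M hM) i : ℕ) with hg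
    have hginj : Function.Injective g :=
      Subtype.val_injective.comp (Set.Infinite.natEmbedding M hM).injective
    have hgmem : ∀ i, g i ∈ M := fun i => ((Set.Infinite.natEmbedding M hM) i).2
    set Mj : ℕ → Set ℕ := fun j => Set.range (fun i => g (Nat.pair j i)) with hMj
    have hMj_sub : ∀ j, Mj j ⊆ M := by
      rintro j x ⟨i, rfl⟩; exact hgmem _
    have hMj_inf : ∀ j, (Mj j).Infinite := by
      intro j
      apply Set.infinite_range_of_injective
      intro i₁ i₂ hi
      have := hginj hi
      exact (Nat.pair_eq_pair.mp this).2
    have hMj_disj : ∀ j j', j ≠ j' → Disjoint (Mj j) (Mj j') := by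
      intro j j' hjj
      rw [Set.disjoint_left]
      rintro x ⟨i, rfl⟩ ⟨i', hi'⟩
      exact hjj ((Nat.pair_eq_pair.mp (hginj hi'.symm)).1)
    choose P hPsub hPgt using fun j => hcon (Mj j) (hMj_sub j) (hMj_inf j)
    set B : ℕ → Set G := fun j => ⋃ h ∈ P j, C h with hB
    have hBL : ∀ j, B j ∈ L := fun j => hUnion_mem C hC (P j)
    have hBdisj : Pairwise (Function.onFun Disjoint B) := by
      intro j j' hjj
      rw [Function.onFun, Set.disjoint_left]
      intro x hx hx'
      simp only [hB, Set.mem_iUnion] at hx hx'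
      obtain ⟨h, hhP, hxC⟩ := hx
      obtain ⟨h', hhP', hxC'⟩ := hx'
      have hne : h ≠ h' := by
        intro hhe
        exact (Set.disjoint_left.mp (hMj_disj j j' hjj))
          (hPsub j hhP) (hhe ▸ hPsub j' hhP')
      exact Set.disjoint_left.mp (hCdisj hne) hxC hxC'
    have htend := hm_sb B hBL hBdisj
    have hev : ∀ᶠ j in atTop, m (B j) < ε := htend.eventually (Filter.Tendsto.eventually_lt_const hε tendsto_id)
    obtain ⟨j, hj⟩ := hev.exists
    exact absurd hj (not_lt.mpr (le_of_lt (hPgt j)))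
  -- construct the nested sequence of infinite index sets
  have step : ∀ (k : ℕ) (s : Set ℕ), s.Infinite →
      ∃ t : Set ℕ, t ⊆ s ∧ t.Infinite ∧
        ∀ P : Set ℕ, P ⊆ t → m (⋃ h ∈ P, C h) ≤ 1/(k+1) :=
    fun k s hs => key (1/(k+1)) (by positivity) s hs
  choose stepf hsub hinf hbound using step
  let Mk : ℕ → {s : Set ℕ // s.Infinite} :=
    Nat.rec ⟨stepf 0 Set.univ Set.infinite_univ, hinf 0 _ _⟩
      (fun k p => ⟨stepf (k+1) p.1 p.2, hinf (k+1) _ _⟩)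
  have hMk_bound : ∀ k, ∀ P : Set ℕ, P ⊆ (Mk k).1 → m (⋃ h ∈ P, C h) ≤ 1/(k+1) := by
    intro k
    cases k with
    | zero => exact hbound 0 _ _
    | succ k => exact hbound (k+1) _ _
  have hMk_succ : ∀ k, (Mk (k+1)).1 ⊆ (Mk k).1 := fun k => hsub (k+1) _ _
  have hMk_mono : ∀ j k, j ≤ k → (Mk k).1 ⊆ (Mk j).1 := by
    intro j k hjk
    induction k, hjk using Nat.le_induction with
    | base => exact subset_rfl
    | succ k hk ih => exact (hMk_succ k).trans ih
  -- pick a strictly increasing sequence of indices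
  have pick : ∀ (k a : ℕ), ∃ b, b ∈ (Mk k).1 ∧ a < b := by
    intro k a
    obtain ⟨b, hb, hab⟩ := (Mk k).2.exists_gt a
    exact ⟨b, hb, hab⟩
  choose pickf hpmem hplt using pick
  let n : ℕ → ℕ := Nat.rec (pickf 0 0) (fun k nk => pickf (k+1) nk)
  have hn_mem : ∀ k, n k ∈ (Mk k).1 := by
    intro k; cases k with
    | zero => exact hpmem 0 0
    | succ k => exact hpmem (k+1) _
  have hn_mono : StrictMono n :=
    strictMono_nat_of_lt_succ (fun k => hplt (k+1) (n k))
  refine ⟨n, hn_mono, ?_⟩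
  intro F hF hFanti hFempty
  have hFL : ∀ s, F s ∈ L := by
    intro s
    obtain ⟨P, hP⟩ := hF s
    rw [hP]
    exact hUnion_mem (fun h => C (n h)) (fun h => hC (n h)) P
  set Q : ℕ → Set ℕ := fun s => {h | (C (n h)).Nonempty ∧ C (n h) ⊆ F s} with hQ
  have hFQ : ∀ s, F s = ⋃ h ∈ Q s, C (n h) := by
    intro s
    apply Set.Subset.antisymm
    · intro x hx
      obtain ⟨P, hP⟩ := hF s
      rw [hP] at hx
      simp only [Set.mem_iUnion] at hx
      obtain ⟨h, hhP, hx'⟩ := hx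
      have hsub' : C (n h) ⊆ F s := by
        rw [hP]; exact Set.subset_biUnion_of_mem (u := fun h => C (n h)) hhP
      exact Set.mem_biUnion (⟨⟨x, hx'⟩, hsub'⟩ : h ∈ Q s) hx'
    · intro x hx
      simp only [Set.mem_iUnion] at hx
      obtain ⟨h, ⟨_, hsub'⟩, hx'⟩ := hx
      exact hsub' hx'
  have hQanti : ∀ s t, s ≤ t → Q t ⊆ Q s := by
    intro s t hst h hh
    exact ⟨hh.1, hh.2.trans (hFanti hst)⟩
  have hQempty : ∀ h, ∃ s, h ∉ Q s := by
    intro h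
    by_contra hc
    push_neg at hc
    obtain ⟨x, hx⟩ := (hc 0).1
    have hxF : x ∈ ⋂ s, F s := Set.mem_iInter.2 (fun s => (hc s).2 hx)
    rw [hFempty] at hxF
    exact hxF
  choose sfun hsfun using hQempty
  rw [Metric.tendsto_atTop]
  intro ε hε
  obtain ⟨k, hk⟩ := exists_nat_one_div_lt hε
  refine ⟨(Finset.range k).sup sfun, ?_⟩
  intro s hs
  have hQk : ∀ h ∈ Q s, k ≤ h := by
    intro h hh
    by_contra hlt
    push_neg at hlt
    have hle : sfun h ≤ s :=
      le_trans (Finset.le_sup (Finset.mem_range.2 hlt)) hs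
    exact hsfun h (hQanti _ _ hle hh)
  have himg : n '' Q s ⊆ (Mk k).1 := by
    rintro _ ⟨h, hh, rfl⟩
    exact hMk_mono k h (hQk h hh) (hn_mem h)
  have hFs_eq : F s = ⋃ j ∈ n '' Q s, C j := by
    rw [hFQ s, Set.biUnion_image]
  have hb := hMk_bound k (n '' Q s) himg
  rw [← hFs_eq] at hb
  have hnn : 0 ≤ m (F s) := hm_nonneg _ (hFL s)
  rw [Real.dist_eq, sub_zero, abs_of_nonneg hnn]
  exact lt_of_le_of_lt hb hk
end

section
/- Lemma on passing from individual to uniform vanishing (real-valued specialization of Lemma 3.4): Let mⱼ : L → [0,∞), j ∈ ℕ, be k-triangular set functions on an algebra L that are uniformly (s)-bounded (sup_j mⱼ(Aᵣ) → 0 for every disjoint sequence (Aᵣ) in L). Let (Hₙ) be a decreasing sequence in L, and suppose for each fixed j: sup{ mⱼ(A) : A ∈ L, A ⊆ Hₙ } → 0 as n → ∞. Then sup_j sup{ mⱼ(A) : A ∈ L, A ⊆ Hₙ } → 0 as n → ∞. -/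
open Filter Topology

/-- From individual to uniform vanishing (real-valued specialization of
Lemma 3.4): uniformly `(s)`-bounded `k`-triangular set functions `m j` on an
algebra `L`, and a decreasing sequence `(H n)` in `L` such that for every fixed
`j` the suprema `sup { m j A : A ∈ L, A ⊆ H n }` vanish as `n → ∞`; then this
vanishing is uniform in `j`. -/
theorem uniform_vanishing_of_pointwise {G : Type*} (L : Set (Set G)) (k : ℕ) (hk : 0 < k)
    (hL_empty : (∅ : Set G) ∈ L)
    (hL_union : ∀ A B : Set G, A ∈ L → B ∈ L → A ∪ B ∈ L)
    (hL_compl : ∀ A : Set G, A ∈ L → Aᶜ ∈ L)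
    (m : ℕ → Set G → ℝ)
    (hm_nonneg : ∀ j, ∀ A ∈ L, 0 ≤ m j A)
    (hm_empty : ∀ j, m j ∅ = 0)
    (hm_equibdd : ∃ u : ℝ, ∀ j, ∀ A ∈ L, m j A ≤ u)
    (hm_subadd : ∀ j, ∀ C D : Set G, C ∈ L → D ∈ L → Disjoint C D →
      m j (C ∪ D) ≤ m j C + (k : ℝ) * m j D)
    (hm_tri : ∀ j, ∀ C D : Set G, C ∈ L → D ∈ L → Disjoint C D →
      m j C - (k : ℝ) * m j D ≤ m j (C ∪ D))
    (hm_usb : ∀ A : ℕ → Set G, (∀ r, A r ∈ L) → Pairwise (Function.onFun Disjoint A) →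
      Tendsto (fun r => ⨆ j, m j (A r)) atTop (𝓝 0))
    (H : ℕ → Set G) (hH : ∀ n, H n ∈ L) (hH_anti : Antitone H)
    (h_pt : ∀ j, ∀ ε > (0 : ℝ), ∃ n₀, ∀ n ≥ n₀, ∀ A ∈ L, A ⊆ H n → m j A ≤ ε) :
    ∀ ε > (0 : ℝ), ∃ n₀, ∀ n ≥ n₀, ∀ j, ∀ A ∈ L, A ⊆ H n → m j A ≤ ε := by
  intro ε hε
  by_contra hcon
  push_neg at hcon
  obtain ⟨u, hu⟩ := hm_equibdd
  have hk' : (0 : ℝ) < (k : ℝ) := by exact_mod_cast hk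
  have hε2k : (0 : ℝ) < ε / (2 * k) := by positivity
  have hN : ∀ j, ∃ N, ∀ n ≥ N, ∀ A ∈ L, A ⊆ H n → m j A ≤ ε / (2 * k) :=
    fun j => h_pt j _ hε2k
  choose N hNspec using hN
  choose f hf jj AA hAL hAsub hAgt using hcon
  have hinter : ∀ A B : Set G, A ∈ L → B ∈ L → A ∩ B ∈ L := by
    intro A B hA hB
    have := hL_compl _ (hL_union _ _ (hL_compl A hA) (hL_compl B hB))
    simpa [Set.compl_union] using this
  -- recursively defined thresholds
  let t : ℕ → ℕ := fun i => Nat.rec 0 (fun _ s => max (f s + 1) (N (jj s))) i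
  have ht : ∀ i, t (i + 1) = max (f (t i) + 1) (N (jj (t i))) := fun i => rfl
  set n : ℕ → ℕ := fun i => f (t i) with hn
  set J : ℕ → ℕ := fun i => jj (t i) with hJ
  set A : ℕ → Set G := fun i => AA (t i) with hA
  have hmono : StrictMono n := by
    apply strictMono_nat_of_lt_succ
    intro i
    have h1 : t (i + 1) ≥ f (t i) + 1 := by rw [ht]; exact le_max_left _ _
    have h2 : f (t (i + 1)) ≥ t (i + 1) := hf _
    simp only [hn]
    omega
  have hsmall : ∀ i, ∀ B ∈ L, B ⊆ H (n (i + 1)) → m (J i) B ≤ ε / (2 * k) := by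
    intro i B hB hBsub
    refine hNspec (J i) (n (i + 1)) ?_ B hB hBsub
    have h1 : t (i + 1) ≥ N (jj (t i)) := by rw [ht]; exact le_max_right _ _
    exact le_trans h1 (hf _)
  set B : ℕ → Set G := fun i => A i ∩ (H (n (i + 1)))ᶜ with hB
  have hBL : ∀ i, B i ∈ L := fun i =>
    hinter _ _ (hAL _) (hL_compl _ (hH _))
  have hBdisj : Pairwise (Function.onFun Disjoint B) := by
    have key : ∀ i l, i < l → Disjoint (B i) (B l) := by
      intro i l hil
      have h1 : B l ⊆ H (n (i + 1)) := by
        refine le_trans ?_ (hH_anti (hmono.monotone (by omega : i + 1 ≤ l)))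
        exact le_trans Set.inter_subset_left (hAsub _)
      have h2 : B i ⊆ (H (n (i + 1)))ᶜ := Set.inter_subset_right
      exact Set.disjoint_of_subset h2 h1 (disjoint_compl_left)
    intro i l hil
    rcases lt_or_gt_of_ne hil with h | h
    · exact key i l h
    · exact (key l i h).symm
  have hBlow : ∀ i, ε / 2 < m (J i) (B i) := by
    intro i
    set D : Set G := A i ∩ H (n (i + 1)) with hD
    have hDL : D ∈ L := hinter _ _ (hAL _) (hH _)
    have hdisj : Disjoint (B i) D :=
      Set.disjoint_of_subset Set.inter_subset_right Set.inter_subset_right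
        disjoint_compl_left
    have hunion : B i ∪ D = A i := by
      rw [hB, hD]
      rw [← Set.inter_union_distrib_left, Set.compl_union_self, Set.inter_univ]
    have hsub := hm_subadd (J i) (B i) D (hBL i) hDL hdisj
    rw [hunion] at hsub
    have hDsmall : m (J i) D ≤ ε / (2 * k) :=
      hsmall i D hDL Set.inter_subset_right
    have hεlt : ε < m (J i) (A i) := hAgt _
    have hkd : (k : ℝ) * m (J i) D ≤ ε / 2 := by
      calc (k : ℝ) * m (J i) D ≤ (k : ℝ) * (ε / (2 * k)) := by nlinarith
        _ = ε / 2 := by field_simp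
    nlinarith
  have hbdd : ∀ i, BddAbove (Set.range fun j => m j (B i)) := by
    intro i
    exact ⟨u, by rintro x ⟨j, rfl⟩; exact hu j _ (hBL i)⟩
  have hsup : ∀ i, ε / 2 ≤ ⨆ j, m j (B i) := fun i =>
    le_trans (hBlow i).le (le_ciSup (hbdd i) (J i))
  have htend := hm_usb B hBL hBdisj
  have : ∀ᶠ r in atTop, (⨆ j, m j (B r)) < ε / 2 :=
    htend.eventually (gt_mem_nhds (by positivity))
  obtain ⟨r, hr⟩ := this.exists
  exact absurd (hsup r) (not_le.mpr hr)
end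

section
/- Let R be a super Dedekind complete and weakly σ-distributive lattice group and (a_{t,l})_{t,l} a (D)-sequence in R. Then there exists an (O)-sequence (σₚ)ₚ in R such that for each p there is φₚ ∈ ℕ^ℕ with ⋁_{t=1}^∞ a_{t,φₚ(t)} ≤ σₚ. -/
/-- Second part of Theorem 2.4: in a super Dedekind complete, weakly
σ-distributive lattice group `R`, for every `(D)`-sequence `(a t l)` there is an
`(O)`-sequence `(σ p)` such that for each `p` there is `φₚ : ℕ → ℕ` with
`⨆ t, a t (φₚ t) ≤ σ p`. Super Dedekind completeness is expressed by the
hypothesis that every nonempty bounded-below set has a countable subset with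
the same infimum; weak σ-distributivity is expressed for the given regulator. -/
theorem regulator_dominated_by_OSequence {R : Type*} [ConditionallyCompleteLattice R]
    [AddCommGroup R] [CovariantClass R R (· + ·) (· ≤ ·)]
    (h_super : ∀ A : Set R, A.Nonempty → BddBelow A →
      ∃ A' ⊆ A, A'.Countable ∧ A'.Nonempty ∧ sInf A' = sInf A)
    (a : ℕ → ℕ → R)
    (ha_bdd : ∃ u : R, ∀ t l, a t l ≤ u)
    (ha_nonneg : ∀ t l, 0 ≤ a t l)
    (ha_anti : ∀ t, Antitone (a t))
    (ha_inf : ∀ t, (⨅ l, a t l) = 0)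
    (h_wsd : (⨅ φ : ℕ → ℕ, ⨆ t : ℕ, a t (φ t)) = 0) :
    ∃ σ : ℕ → R, Antitone σ ∧ (⨅ p, σ p) = 0 ∧
      ∀ p : ℕ, ∃ φ : ℕ → ℕ, (⨆ t : ℕ, a t (φ t)) ≤ σ p := by
  obtain ⟨u, hu⟩ := ha_bdd
  have hbdd : ∀ φ : ℕ → ℕ, BddAbove (Set.range fun t => a t (φ t)) := by
    intro φ
    exact ⟨u, by rintro x ⟨t, rfl⟩; exact hu t (φ t)⟩
  -- nonnegativity of each supremum
  have hsup_nonneg : ∀ φ : ℕ → ℕ, 0 ≤ ⨆ t, a t (φ t) := by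
    intro φ
    exact le_trans (ha_nonneg 0 (φ 0)) (le_ciSup (hbdd φ) 0)
  set A : Set R := Set.range (fun φ : ℕ → ℕ => ⨆ t, a t (φ t)) with hA
  have hAne : A.Nonempty := ⟨_, ⟨fun _ => 0, rfl⟩⟩
  have hAbdd : BddBelow A := by
    refine ⟨0, ?_⟩
    rintro x ⟨φ, rfl⟩
    exact hsup_nonneg φ
  have hAinf : sInf A = 0 := h_wsd
  obtain ⟨A', hA'sub, hA'count, hA'ne, hA'inf⟩ := h_super A hAne hAbdd
  obtain ⟨f, hf⟩ := Set.Countable.exists_eq_range hA'count hA'ne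
  have hfmem : ∀ n, f n ∈ A := fun n => hA'sub (hf ▸ Set.mem_range_self n)
  choose Φ hΦ using fun n => hfmem n
  -- hΦ : ∀ n, (⨆ t, a t (Φ n t)) = f n
  set σ : ℕ → R := fun p => (Finset.range (p + 1)).inf' ⟨0, Finset.mem_range.2 (Nat.succ_pos p)⟩ f
    with hσ
  have hσ_le : ∀ p n, n ≤ p → σ p ≤ f n := fun p n hn =>
    Finset.inf'_le f (Finset.mem_range.2 (Nat.lt_succ_of_le hn))
  have hσ_anti : Antitone σ := by
    intro p q hpq
    refine Finset.le_inf' _ _ ?_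
    intro n hn
    exact hσ_le q n (le_trans (Nat.lt_succ_iff.1 (Finset.mem_range.1 hn)) hpq)
  have hσ_nonneg : ∀ p, 0 ≤ σ p := by
    intro p
    refine Finset.le_inf' _ _ ?_
    intro n hn
    obtain ⟨φ, hφ⟩ := hfmem n
    rw [← hφ]
    exact hsup_nonneg φ
  refine ⟨σ, hσ_anti, ?_, ?_⟩
  · apply le_antisymm
    · have hbb : BddBelow (Set.range σ) := ⟨0, by rintro x ⟨p, rfl⟩; exact hσ_nonneg p⟩
      have h1 : (⨅ p, σ p) ≤ sInf A' := by
        rw [hf]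
        refine le_csInf ⟨f 0, Set.mem_range_self 0⟩ ?_
        rintro b ⟨n, rfl⟩
        exact le_trans (ciInf_le hbb n) (hσ_le n n le_rfl)
      rw [hA'inf, hAinf] at h1
      exact h1
    · exact le_ciInf hσ_nonneg
  · intro p
    refine ⟨fun t => (Finset.range (p + 1)).sup (fun n => Φ n t), ?_⟩
    refine ciSup_le ?_
    intro t
    refine Finset.le_inf' _ _ ?_
    intro n hn
    rw [← hΦ n]
    refine le_trans ?_ (le_ciSup (hbdd (Φ n)) t)
    exact ha_anti t (Finset.le_sup (f := fun n => Φ n t) hn)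
end

section
/- Uniform (s)-boundedness of a sequence implies uniform (s)-boundedness of the semivariations: if mⱼ : L → [0,∞), j ∈ ℕ, are equibounded set functions with mⱼ(∅)=0 that are uniformly (s)-bounded (sup_j mⱼ(Cₕ) → 0 for every disjoint sequence (Cₕ) in L), then the semivariations v(mⱼ)(A) = sup{ mⱼ(B) : B ∈ L, B ⊆ A } are equibounded and uniformly (s)-bounded. -/
open Filter Topology

/-- If the nonnegative set functions `m j` on an algebra `L` are equibounded and
uniformly `(s)`-bounded, then their semivariations
`v j A = sup { m j B : B ∈ L, B ⊆ A }` are equibounded and uniformly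
`(s)`-bounded too. -/
theorem semivariation_uniformly_sBounded {G : Type*} (L : Set (Set G))
    (hL_empty : (∅ : Set G) ∈ L)
    (hL_union : ∀ A B : Set G, A ∈ L → B ∈ L → A ∪ B ∈ L)
    (hL_compl : ∀ A : Set G, A ∈ L → Aᶜ ∈ L)
    (m : ℕ → Set G → ℝ)
    (hm_nonneg : ∀ j, ∀ A ∈ L, 0 ≤ m j A)
    (hm_empty : ∀ j, m j ∅ = 0)
    (hm_equibdd : ∃ u : ℝ, ∀ j, ∀ A ∈ L, m j A ≤ u)
    (hm_usb : ∀ C : ℕ → Set G, (∀ h, C h ∈ L) → Pairwise (Function.onFun Disjoint C) →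
      Tendsto (fun h => ⨆ j, m j (C h)) atTop (𝓝 0))
    (v : ℕ → Set G → ℝ)
    (hv : ∀ j, ∀ A : Set G, v j A = sSup {x : ℝ | ∃ B ∈ L, B ⊆ A ∧ x = m j B}) :
    (∃ u : ℝ, ∀ j, ∀ A ∈ L, v j A ≤ u) ∧
    (∀ C : ℕ → Set G, (∀ h, C h ∈ L) → Pairwise (Function.onFun Disjoint C) →
      Tendsto (fun h => ⨆ j, v j (C h)) atTop (𝓝 0)) := by
  obtain ⟨u, hu⟩ := hm_equibdd
  have hne : ∀ j (A : Set G), (0:ℝ) ∈ {x : ℝ | ∃ B ∈ L, B ⊆ A ∧ x = m j B} := by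
    intro j A; exact ⟨∅, hL_empty, Set.empty_subset A, (hm_empty j).symm⟩
  have hub : ∀ j (A : Set G), ∀ x ∈ {x : ℝ | ∃ B ∈ L, B ⊆ A ∧ x = m j B}, x ≤ u := by
    rintro j A x ⟨B, hB, -, rfl⟩; exact hu j B hB
  have hvle : ∀ j A, v j A ≤ u := by
    intro j A; rw [hv]; exact csSup_le ⟨0, hne j A⟩ (hub j A)
  have hv0 : ∀ j A, 0 ≤ v j A := by
    intro j A; rw [hv]; exact le_csSup ⟨u, hub j A⟩ (hne j A)
  refine ⟨⟨u, fun j A _ => hvle j A⟩, ?_⟩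
  intro C hC hCd
  rw [Metric.tendsto_atTop]
  intro ε hε
  by_contra hcon
  push_neg at hcon
  have hfreq : ∃ᶠ h in atTop, ε ≤ ⨆ j, v j (C h) := by
    rw [frequently_atTop]
    intro N
    obtain ⟨n, hn, hd⟩ := hcon N
    refine ⟨n, hn, ?_⟩
    rw [Real.dist_eq, sub_zero,
      abs_of_nonneg (Real.iSup_nonneg fun j => hv0 j (C n))] at hd
    linarith
  obtain ⟨φ, hφ, hφε⟩ := Filter.extraction_of_frequently_atTop hfreq
  have hBk : ∀ k, ∃ j, ∃ B ∈ L, B ⊆ C (φ k) ∧ ε/2 < m j B := by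
    intro k
    have h1 : ε ≤ ⨆ j, v j (C (φ k)) := hφε k
    by_contra hc; push_neg at hc
    have hall : ∀ j, v j (C (φ k)) ≤ ε/2 := by
      intro j; rw [hv]
      refine csSup_le ⟨0, hne j _⟩ ?_
      rintro x ⟨B, hB, hBs, rfl⟩
      exact hc j B hB hBs
    have := ciSup_le hall
    linarith
  choose j B hBL hBsub hBε using hBk
  have hBd : Pairwise (Function.onFun Disjoint B) := by
    intro k l hkl
    exact Set.disjoint_of_subset (hBsub k) (hBsub l) (hCd (hφ.injective.ne hkl))
  have htend := hm_usb B hBL hBd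
  rw [Metric.tendsto_atTop] at htend
  obtain ⟨N, hN⟩ := htend (ε/2) (by linarith)
  have hNN := hN N le_rfl
  rw [Real.dist_eq, sub_zero,
    abs_of_nonneg (Real.iSup_nonneg fun i => hm_nonneg i _ (hBL N))] at hNN
  have hbdd : BddAbove (Set.range fun i => m i (B N)) := by
    refine ⟨u, ?_⟩; rintro x ⟨i, rfl⟩; exact hu i _ (hBL N)
  have hle : m (j N) (B N) ≤ ⨆ i, m i (B N) := le_ciSup hbdd (j N)
  linarith [hBε N]
end
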